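/- Let n, k ≥ 2 and let f be a k-fold on (ℂⁿ,0) written as f = l ∘ f₁ ∘ h⁻¹ for germs of biholomorphisms h, l on (ℂⁿ,0), where f₁(x) = (x₁^k, x₂, …, xₙ). Let φ₁(x) = (λx₁, x₂, …, xₙ) with λ = e^{2πi/k}. Then every reflection ρ on (ℂⁿ,0) associated with f (i.e. satisfying f ∘ ρ = f as germs) is of the form ρ = h ∘ φ₁^j ∘ h⁻¹ for some j ∈ {1, …, k−1}. -/

import Mathlib

noncomputable section

open Filter Function

/-- ℂⁿ as the space of functions `Fin n → ℂ`. -/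
abbrev Cn (n : ℕ) : Type := Fin n → ℂ

/-- Equality of germs at 0 of maps (ℂⁿ,0) → (ℂⁿ,0). -/
def GermEq {n : ℕ} (f g : Cn n → Cn n) : Prop := f =ᶠ[nhds 0] g

/-- Germ at 0 of a holomorphic map (ℂⁿ,0) → (ℂⁿ,0): holomorphic on a
neighborhood of 0 and sending 0 to 0. -/
def IsHoloGerm {n : ℕ} (f : Cn n → Cn n) : Prop :=
  f 0 = 0 ∧ ∀ᶠ x in nhds (0 : Cn n), AnalyticAt ℂ f x

/-- Germ of biholomorphism on (ℂⁿ,0): holomorphic germ with invertible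
derivative at 0. -/
def IsBiholGerm {n : ℕ} (h : Cn n → Cn n) : Prop :=
  IsHoloGerm h ∧ IsUnit (fderiv ℂ h 0)

/-- φ has order exactly r as a germ at 0 (φ^[r] = id as germs, r minimal). -/
def HasOrderGerm {n : ℕ} (φ : Cn n → Cn n) (r : ℕ) : Prop :=
  GermEq (φ^[r]) id ∧ ∀ m : ℕ, 0 < m → m < r → ¬ GermEq (φ^[m]) id

/-- The fixed-point set of φ near 0 is a complex submanifold of codimension 1:
locally the zero set of a holomorphic submersion F : (ℂⁿ,0) → (ℂ,0). -/
def FixIsHypersurface {n : ℕ} (φ : Cn n → Cn n) : Prop :=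
  ∃ F : Cn n → ℂ, F 0 = 0 ∧ AnalyticAt ℂ F 0 ∧ fderiv ℂ F 0 ≠ 0 ∧
    ∀ᶠ x in nhds (0 : Cn n), (φ x = x ↔ F x = 0)

/-- A reflection on (ℂⁿ,0): germ of biholomorphism of finite order ≥ 2 whose
fixed-point set is a codimension-1 complex submanifold. -/
def IsReflection {n : ℕ} (φ : Cn n → Cn n) : Prop :=
  IsBiholGerm φ ∧ (∃ r : ℕ, 2 ≤ r ∧ HasOrderGerm φ r) ∧ FixIsHypersurface φ

/-- A reflection of order exactly k. -/
def IsReflectionOfOrder {n : ℕ} (φ : Cn n → Cn n) (k : ℕ) : Prop :=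
  IsBiholGerm φ ∧ HasOrderGerm φ k ∧ FixIsHypersurface φ

/-- The canonical k-fold f₁(x) = (x₁^k, x₂, …, xₙ). -/
def canonFold (n k : ℕ) : Cn n → Cn n := fun x i => if (i : ℕ) = 0 then x i ^ k else x i

/-- The canonical reflection φ₁(x) = (λ x₁, x₂, …, xₙ) with λ = e^{2πi/k}. -/
def canonRefl (n k : ℕ) : Cn n → Cn n :=
  fun x i => if (i : ℕ) = 0 then Complex.exp (2 * (Real.pi : ℂ) * Complex.I / (k : ℂ)) * x i
    else x i

/-- f is a k-fold: a holomorphic germ 𝒜-equivalent to the canonical k-fold,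
i.e. f = l ∘ f₁ ∘ h⁻¹ as germs for germs of biholomorphisms h, l
(equivalently, f ∘ h = l ∘ f₁ as germs). -/
def IsKFold {n : ℕ} (k : ℕ) (f : Cn n → Cn n) : Prop :=
  IsHoloGerm f ∧ ∃ h l : Cn n → Cn n, IsBiholGerm h ∧ IsBiholGerm l ∧
    GermEq (f ∘ h) (l ∘ canonFold n k)

/-- The canonical k-fold in the i-th coordinate: fᵢ(x) = (x₁, …, xᵢ^k, …, xₙ). -/
def foldAt (n k : ℕ) (i : Fin n) : Cn n → Cn n := fun x j => if j = i then x j ^ k else x j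

/-!
Conjugating by `h` turns `ρ` into `σ = h⁻¹ ∘ ρ ∘ h`, and `f ∘ ρ = f` becomes `f₁ ∘ σ = f₁` once `l`
is cancelled. So `σ` fixes `x₂, …, xₙ` and `σ₁ᵏ = x₁ᵏ`, i.e. `∏_{μᵏ = 1} (σ₁ - μ x₁) = 0`; as germs
of holomorphic functions form an integral domain, `σ₁ = λʲ x₁` for some `j < k`, i.e. `σ = φ₁ʲ`.
Finally `j ≠ 0`, since a reflection is not the identity.
-/

open Topology

section Germs

variable {α β γ : Type*} {F : Filter α} {G : Filter β}

theorem Filter.EventuallyEq.of_comp_left {l : β → γ} {l' : γ → β} {u v : α → β}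
    (hu : Tendsto u F G) (hv : Tendsto v F G) (hl : ∀ᶠ y in G, l' (l y) = y)
    (huv : l ∘ u =ᶠ[F] l ∘ v) : u =ᶠ[F] v := by
  filter_upwards [huv, hu.eventually hl, hv.eventually hl] with x hx hux hvx
  rw [← hux, ← hvx]
  exact congrArg l' hx

theorem Filter.EventuallyEq.of_comp_right {h : α → β} {g : β → α} {u v : β → γ}
    (hg : Tendsto g G F) (hhg : ∀ᶠ y in G, h (g y) = y) (huv : u ∘ h =ᶠ[F] v ∘ h) :
    u =ᶠ[G] v := by
  filter_upwards [hhg, hg.eventually huv] with y hy hy'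
  simpa only [Function.comp_apply, hy] using hy'

end Germs

theorem AnalyticAt.exists_analyticAt_localInverse {𝕜 E F : Type*} [NontriviallyNormedField 𝕜]
    [NormedAddCommGroup E] [NormedSpace 𝕜 E] [CompleteSpace E]
    [NormedAddCommGroup F] [NormedSpace 𝕜 F] [CompleteSpace F]
    {f : E → F} {a : E} {f' : E ≃L[𝕜] F} (hf : AnalyticAt 𝕜 f a) (hf' : fderiv 𝕜 f a = f') :
    ∃ g : F → E, AnalyticAt 𝕜 g (f a) ∧ (∀ᶠ x in 𝓝 a, g (f x) = x) ∧
      ∀ᶠ y in 𝓝 (f a), f (g y) = y := by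
  have hstrict : HasStrictFDerivAt f (f' : E →L[𝕜] F) a := hf' ▸ hf.hasStrictFDerivAt
  exact ⟨hstrict.localInverse f f' a,
    (hstrict.toOpenPartialHomeomorph f).analyticAt_symm'
      hstrict.mem_toOpenPartialHomeomorph_source hf hf',
    hstrict.eventually_left_inverse, hstrict.eventually_right_inverse⟩

theorem IsHoloGerm.tendsto {n : ℕ} {f : Cn n → Cn n} (hf : IsHoloGerm f) :
    Tendsto f (𝓝 0) (𝓝 0) := by
  simpa only [hf.1] using hf.2.self_of_nhds.continuousAt.tendsto

namespace IsBiholGerm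

variable {n : ℕ} {h : Cn n → Cn n}

theorem exists_localInverse (hh : IsBiholGerm h) :
    ∃ g : Cn n → Cn n, IsHoloGerm g ∧ (∀ᶠ x in 𝓝 0, g (h x) = x) ∧
      ∀ᶠ y in 𝓝 0, h (g y) = y := by
  obtain ⟨⟨h0, hana⟩, ⟨u, hu⟩⟩ := hh
  obtain ⟨g, hg, hgh, hhg⟩ := hana.self_of_nhds.exists_analyticAt_localInverse
    (f' := ContinuousLinearEquiv.unitsEquiv ℂ (Cn n) u) hu.symm
  rw [h0] at hg hhg
  exact ⟨g, ⟨by simpa [h0] using hgh.self_of_nhds, hg.eventually_analyticAt⟩, hgh, hhg⟩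

theorem eventuallyEq_of_comp_left (hh : IsBiholGerm h) {α : Type*} {F : Filter α}
    {u v : α → Cn n} (hu : Tendsto u F (𝓝 0)) (hv : Tendsto v F (𝓝 0))
    (huv : h ∘ u =ᶠ[F] h ∘ v) : u =ᶠ[F] v :=
  have ⟨_, _, hgh, _⟩ := hh.exists_localInverse
  huv.of_comp_left hu hv hgh

theorem eventuallyEq_of_comp_right (hh : IsBiholGerm h) {γ : Type*} {u v : Cn n → γ}
    (huv : u ∘ h =ᶠ[𝓝 0] v ∘ h) : u =ᶠ[𝓝 0] v :=
  have ⟨_, hg, _, hhg⟩ := hh.exists_localInverse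
  huv.of_comp_right hg.tendsto hhg

theorem exists_conj (hh : IsBiholGerm h) {ρ : Cn n → Cn n} (hρ : IsHoloGerm ρ) :
    ∃ σ : Cn n → Cn n, IsHoloGerm σ ∧ ρ ∘ h =ᶠ[𝓝 0] h ∘ σ := by
  obtain ⟨g, hg, -, hhg⟩ := hh.exists_localInverse
  have hh0 : h 0 = 0 := hh.1.1
  have hσ : AnalyticAt ℂ (g ∘ ρ ∘ h) 0 :=
    hg.2.self_of_nhds.comp_of_eq (hρ.2.self_of_nhds.comp_of_eq hh.1.2.self_of_nhds hh0)
      (by simp [hh0, hρ.1])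
  refine ⟨g ∘ ρ ∘ h, ⟨by simp [hh0, hρ.1, hg.1], hσ.eventually_analyticAt⟩, ?_⟩
  exact ((hρ.tendsto.comp hh.1.tendsto).eventually hhg).mono fun x hx => hx.symm

end IsBiholGerm

section IdentityTheorem

variable {E : Type*} [NormedAddCommGroup E] [NormedSpace ℂ E] {a : E}

theorem AnalyticAt.eventuallyEq_zero_or_of_mul {f g : E → ℂ} (hf : AnalyticAt ℂ f a)
    (hg : AnalyticAt ℂ g a) (hfg : ∀ᶠ x in 𝓝 a, f x * g x = 0) :
    f =ᶠ[𝓝 a] 0 ∨ g =ᶠ[𝓝 a] 0 := by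
  obtain ⟨r, hr, hball⟩ := Metric.mem_nhds_iff.mp
    (hf.eventually_analyticAt.and (hg.eventually_analyticAt.and hfg))
  have hUa : Metric.ball a r ∈ 𝓝 a := Metric.ball_mem_nhds a hr
  by_cases hf0 : f =ᶠ[𝓝 a] 0
  · exact Or.inl hf0
  right
  obtain ⟨b, hb, hfb⟩ : ∃ b ∈ Metric.ball a r, f b ≠ 0 := by
    by_contra! hcon
    exact hf0 (Filter.mem_of_superset hUa hcon)
  have hgb : g =ᶠ[𝓝 b] 0 := by
    filter_upwards [(hball hb).1.continuousAt.eventually_ne hfb,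
      Metric.isOpen_ball.mem_nhds hb] with x hfx hx
    exact (mul_eq_zero.mp (hball hx).2.2).resolve_left hfx
  have hgU : Set.EqOn g 0 (Metric.ball a r) :=
    AnalyticOnNhd.eqOn_zero_of_preconnected_of_eventuallyEq_zero (fun x hx => (hball hx).2.1)
      (convex_ball a r).isPreconnected hb hgb
  exact Filter.mem_of_superset hUa hgU

theorem AnalyticAt.exists_eventuallyEq_zero_of_prod {ι : Type*} (s : Finset ι) {g : ι → E → ℂ}
    (hg : ∀ i ∈ s, AnalyticAt ℂ (g i) a) (hprod : ∀ᶠ x in 𝓝 a, ∏ i ∈ s, g i x = 0) :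
    ∃ i ∈ s, g i =ᶠ[𝓝 a] 0 := by
  classical
  induction s using Finset.induction_on with
  | empty => simpa using hprod.self_of_nhds
  | insert i s hi ih =>
    simp only [Finset.prod_insert hi] at hprod
    rcases (hg i (Finset.mem_insert_self i s)).eventuallyEq_zero_or_of_mul
      (Finset.analyticAt_fun_prod s fun j hj => hg j (Finset.mem_insert_of_mem hj)) hprod with
      hgi | hrest
    · exact ⟨i, Finset.mem_insert_self i s, hgi⟩
    · obtain ⟨j, hj, hgj⟩ := ih (fun j hj => hg j (Finset.mem_insert_of_mem hj)) hrest
      exact ⟨j, Finset.mem_insert_of_mem hj, hgj⟩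

theorem AnalyticAt.exists_eventuallyEq_pow_mul_of_pow_eq_pow {u v : E → ℂ} (hu : AnalyticAt ℂ u a)
    (hv : AnalyticAt ℂ v a) {k : ℕ} {ζ : ℂ} (hζ : IsPrimitiveRoot ζ k) (hk : 0 < k)
    (huv : ∀ᶠ x in 𝓝 a, u x ^ k = v x ^ k) :
    ∃ j < k, ∀ᶠ x in 𝓝 a, u x = ζ ^ j * v x := by
  have : NeZero k := ⟨hk.ne'⟩
  obtain ⟨μ, hμ, hμuv⟩ := AnalyticAt.exists_eventuallyEq_zero_of_prod
    (Polynomial.nthRootsFinset k (1 : ℂ)) (g := fun μ x => u x - μ * v x)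
    (fun μ _ => hu.sub (analyticAt_const.mul hv))
    (huv.mono fun x hx => by rw [← hζ.pow_sub_pow_eq_prod_sub_mul (u x) (v x) hk, hx, sub_self])
  obtain ⟨j, hjk, rfl⟩ := hζ.eq_pow_of_pow_eq_one ((Polynomial.mem_nthRootsFinset hk 1).mp hμ)
  exact ⟨j, hjk, hμuv.mono fun x hx => sub_eq_zero.mp hx⟩

end IdentityTheorem

theorem canonRefl_iterate_apply (n k j : ℕ) (x : Cn n) (i : Fin n) :
    (canonRefl n k)^[j] x i =
      if (i : ℕ) = 0 then Complex.exp (2 * (Real.pi : ℂ) * Complex.I / (k : ℂ)) ^ j * x i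
      else x i := by
  induction j with
  | zero => simp
  | succ j ih =>
    rw [iterate_succ_apply', canonRefl]
    split_ifs with hi
    · rw [ih, if_pos hi, pow_succ']; ring
    · rw [ih, if_neg hi]

theorem continuous_canonFold (n k : ℕ) : Continuous (canonFold n k) :=
  continuous_pi fun i => by
    unfold canonFold
    split_ifs
    · exact (continuous_apply i).pow k
    · exact continuous_apply i

theorem tendsto_canonFold {n k : ℕ} (hk : k ≠ 0) : Tendsto (canonFold n k) (𝓝 0) (𝓝 0) := by
  have hzero : canonFold n k 0 = 0 := funext fun i => by simp [canonFold, zero_pow hk]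
  simpa only [hzero] using (continuous_canonFold n k).tendsto 0

theorem exists_canonRefl_iterate_of_canonFold_comp {n k : ℕ} [NeZero n] (hk : 0 < k)
    {σ : Cn n → Cn n} (hσ : AnalyticAt ℂ σ 0) (hfold : canonFold n k ∘ σ =ᶠ[𝓝 0] canonFold n k) :
    ∃ j < k, σ =ᶠ[𝓝 0] (canonRefl n k)^[j] := by
  have hcoord (i : Fin n) (y : Cn n) : AnalyticAt ℂ (fun x : Cn n => x i) y :=
    (ContinuousLinearMap.proj (R := ℂ) (φ := fun _ : Fin n => ℂ) i).analyticAt y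
  obtain ⟨j, hjk, hσ0⟩ :=
    ((hcoord 0 _).comp hσ).exists_eventuallyEq_pow_mul_of_pow_eq_pow (hcoord 0 0)
      (Complex.isPrimitiveRoot_exp k hk.ne') hk
      (hfold.mono fun x hx => by simpa [canonFold] using congrFun hx 0)
  refine ⟨j, hjk, ?_⟩
  filter_upwards [hfold, hσ0] with x hx hx0
  funext i
  rw [canonRefl_iterate_apply]
  split_ifs with hi
  · obtain rfl : i = 0 := Fin.ext hi
    exact hx0
  · simpa [canonFold, hi] using congrFun hx i

theorem stmt_1_general (n k : ℕ) (hn : 2 ≤ n) (hk : 2 ≤ k)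
    (f h l : Cn n → Cn n)
    (hh : IsBiholGerm h) (hl : IsBiholGerm l)
    (hfhl : GermEq (f ∘ h) (l ∘ canonFold n k))
    (ρ : Cn n → Cn n) (hρ : IsReflection ρ)
    (hassoc : GermEq (f ∘ ρ) f) :
    ∃ j : ℕ, 1 ≤ j ∧ j ≤ k - 1 ∧ GermEq (ρ ∘ h) (h ∘ (canonRefl n k)^[j]) := by
  have : NeZero n := ⟨by omega⟩
  obtain ⟨⟨hρ, -⟩, ⟨r, hr, -, hρord⟩, -⟩ := hρ
  obtain ⟨σ, hσ, hρh⟩ := hh.exists_conj hρ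
  have hfold : canonFold n k ∘ σ =ᶠ[𝓝 0] canonFold n k := by
    refine hl.eventuallyEq_of_comp_left ((tendsto_canonFold (by omega)).comp hσ.tendsto)
      (tendsto_canonFold (by omega)) ?_
    calc l ∘ canonFold n k ∘ σ = (l ∘ canonFold n k) ∘ σ := rfl
      _ =ᶠ[𝓝 0] (f ∘ h) ∘ σ := (hfhl.comp_tendsto hσ.tendsto).symm
      _ =ᶠ[𝓝 0] (f ∘ ρ) ∘ h := (hρh.fun_comp f).symm
      _ =ᶠ[𝓝 0] f ∘ h := hassoc.comp_tendsto hh.1.tendsto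
      _ =ᶠ[𝓝 0] l ∘ canonFold n k := hfhl
  obtain ⟨j, hjk, hσj⟩ :=
    exists_canonRefl_iterate_of_canonFold_comp (by omega) hσ.2.self_of_nhds hfold
  have hρσ : ρ ∘ h =ᶠ[𝓝 0] h ∘ (canonRefl n k)^[j] := hρh.trans (hσj.fun_comp h)
  have hj : j ≠ 0 := by
    rintro rfl
    exact hρord 1 one_pos hr (hh.eventuallyEq_of_comp_right hρσ)
  exact ⟨j, by omega, by omega, hρσ⟩

/-- Proposition 2.5: any reflection associated with a k-fold
f = l ∘ f₁ ∘ h⁻¹ is of the form h ∘ φ₁^j ∘ h⁻¹ for some j ∈ {1, …, k−1}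
(stated as ρ ∘ h = h ∘ φ₁^j as germs). -/
theorem stmt_1 (n k : ℕ) (hn : 2 ≤ n) (hk : 2 ≤ k)
    (f h l : Cn n → Cn n) (hf : IsHoloGerm f)
    (hh : IsBiholGerm h) (hl : IsBiholGerm l)
    (hfhl : GermEq (f ∘ h) (l ∘ canonFold n k))
    (ρ : Cn n → Cn n) (hρ : IsReflection ρ)
    (hassoc : GermEq (f ∘ ρ) f) :
    ∃ j : ℕ, 1 ≤ j ∧ j ≤ k - 1 ∧ GermEq (ρ ∘ h) (h ∘ (canonRefl n k)^[j]) :=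
  stmt_1_general n k hn hk f h l hh hl hfhl ρ hρ hassoc
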